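/- If two knowledge states s and s' are k-equivalent in an evolution frame EF (i.e., Bel(s + E_1,...,E_j) = Bel(s' + E_1,...,E_j) for all event sequences of length j ≤ k), then EF, s ⊨ φ iff EF, s' ⊨ φ for any EKBL state formula φ in which the until operator U does not occur and whose nesting depth of evolution quantifiers E and A is at most k. -/
import Mathlib


mutual
inductive SForm (Rule : Type) : Type
  | atom : Rule → SForm Rule
  | conj : SForm Rule → SForm Rule → SForm Rule
  | nnot : SForm Rule → SForm Rule
  | ex : EForm Rule → SForm Rule
  | all : EForm Rule → SForm Rule
inductive EForm (Rule : Type) : Type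
  | next : SForm Rule → EForm Rule
  | untl : SForm Rule → SForm Rule → EForm Rule
end

/-- A path in a transition system. -/
def IsPath {σ : Type} (R : σ → σ → Prop) (p : ℕ → σ) : Prop :=
  ∀ i, R (p i) (p (i + 1))

mutual
/-- Satisfaction of EKBL state formulas over a Kripke-style structure with
    states `σ`, transition relation `R`, and labelling `L`. -/
def SatS {Rule σ : Type} (R : σ → σ → Prop) (L : σ → Set Rule) : σ → SForm Rule → Prop
  | s, .atom r => r ∈ L s
  | s, .conj φ ψ => SatS R L s φ ∧ SatS R L s ψ
  | s, .nnot φ => ¬ SatS R L s φ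
  | s, .ex φ => ∃ p : ℕ → σ, IsPath R p ∧ p 0 = s ∧ SatE R L p φ
  | s, .all φ => ∀ p : ℕ → σ, IsPath R p → p 0 = s → SatE R L p φ
/-- Satisfaction of EKBL evolution formulas along a path. -/
def SatE {Rule σ : Type} (R : σ → σ → Prop) (L : σ → Set Rule) : (ℕ → σ) → EForm Rule → Prop
  | p, .next φ => SatS R L (p 1) φ
  | p, .untl φ ψ => ∃ i, SatS R L (p i) ψ ∧ ∀ j, j < i → SatS R L (p j) φ
end

structure KState (Rule Event : Type) : Type where
  kb : Set Rule
  events : List Event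

/-- Append a sequence of events to a knowledge state. -/
def KState.append {Rule Event : Type} (s : KState Rule Event) (es : List Event) :
    KState Rule Event := ⟨s.kb, s.events ++ es⟩

/-- All events of the list belong to the event class `EC`. -/
def InEC {Event : Type} (EC : Set Event) (es : List Event) : Prop := ∀ E ∈ es, E ∈ EC

/-- Successor relation on knowledge states induced by the event class `EC`. -/
def Succ {Rule Event : Type} (EC : Set Event) (s s' : KState Rule Event) : Prop :=
  ∃ E ∈ EC, s' = s.append [E]

/-- Strong equivalence of knowledge states with respect to belief operator `B`. -/
def StrongEquiv {Rule Event : Type} (B : KState Rule Event → Set Rule) (EC : Set Event)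
    (s s' : KState Rule Event) : Prop :=
  ∀ es : List Event, InEC EC es → B (s.append es) = B (s'.append es)

/-- k-equivalence of knowledge states. -/
def KEquiv {Rule Event : Type} (B : KState Rule Event → Set Rule) (EC : Set Event) (k : ℕ)
    (s s' : KState Rule Event) : Prop :=
  ∀ es : List Event, InEC EC es → es.length ≤ k → B (s.append es) = B (s'.append es)

mutual
/-- Nesting depth of evolution quantifiers E and A in a state formula. -/
def SForm.depth {Rule : Type} : SForm Rule → ℕ
  | .atom _ => 0
  | .conj φ ψ => max φ.depth ψ.depth
  | .nnot φ => φ.depth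
  | .ex φ => φ.depth + 1
  | .all φ => φ.depth + 1
def EForm.depth {Rule : Type} : EForm Rule → ℕ
  | .next φ => φ.depth
  | .untl φ ψ => max φ.depth ψ.depth
end

mutual
/-- The until operator U does not occur in the state formula. -/
def SForm.UFree {Rule : Type} : SForm Rule → Prop
  | .atom _ => True
  | .conj φ ψ => φ.UFree ∧ ψ.UFree
  | .nnot φ => φ.UFree
  | .ex φ => φ.UFree
  | .all φ => φ.UFree
def EForm.UFree {Rule : Type} : EForm Rule → Prop
  | .next φ => φ.UFree
  | .untl _ _ => False
end

lemma KState.append_nil {Rule Event : Type} (s : KState Rule Event) : s.append [] = s := by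
  simp [KState.append]

lemma KState.append_append {Rule Event : Type} (s : KState Rule Event) (a b : List Event) :
    (s.append a).append b = s.append (a ++ b) := by
  simp [KState.append]

lemma exNext_iff {Rule Event : Type} (B : KState Rule Event → Set Rule) (EC : Set Event)
    (s : KState Rule Event) (ψ : SForm Rule) :
    SatS (Succ EC) B s (.ex (.next ψ)) ↔
      ∃ t, Succ EC s t ∧ SatS (Succ EC) B t ψ := by
  constructor
  · rintro ⟨p, hp, h0, hsat⟩
    exact ⟨p 1, h0 ▸ hp 0, by simpa [SatE] using hsat⟩
  · rintro ⟨t, ⟨E, hE, ht⟩, hsat⟩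
    refine ⟨fun i => s.append (List.replicate i E), ?_, by simp [KState.append_nil], ?_⟩
    · intro i
      refine ⟨E, hE, ?_⟩
      rw [KState.append_append]
      simp [List.replicate_succ']
    · show SatS (Succ EC) B (s.append (List.replicate 1 E)) ψ
      simpa [ht] using hsat

lemma allNext_iff {Rule Event : Type} (B : KState Rule Event → Set Rule) (EC : Set Event)
    (s : KState Rule Event) (ψ : SForm Rule) :
    SatS (Succ EC) B s (.all (.next ψ)) ↔
      ∀ t, Succ EC s t → SatS (Succ EC) B t ψ := by
  constructor
  · rintro hall t ⟨E, hE, ht⟩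
    have := hall (fun i => s.append (List.replicate i E))
      (fun i => ⟨E, hE, by rw [KState.append_append]; simp [List.replicate_succ']⟩)
      (by simp [KState.append_nil])
    simpa [SatE, ht] using this
  · intro hall p hp h0
    exact hall (p 1) (h0 ▸ hp 0)

lemma succ_lift {Rule Event : Type} (B : KState Rule Event → Set Rule) (EC : Set Event)
    {k : ℕ} {s s' t : KState Rule Event} (h : KEquiv B EC (k + 1) s s')
    (hst : Succ EC s t) : ∃ t', Succ EC s' t' ∧ KEquiv B EC k t t' := by
  obtain ⟨E, hE, ht⟩ := hst
  refine ⟨s'.append [E], ⟨E, hE, rfl⟩, ?_⟩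
  intro es hes hlen
  rw [ht, KState.append_append, KState.append_append]
  exact h (E :: es) (by
    intro F hF
    rcases List.mem_cons.mp hF with h1 | h2
    · exact h1 ▸ hE
    · exact hes F h2) (by simpa using Nat.succ_le_succ hlen)

theorem kEquiv_sat_iff_aux {Rule Event : Type} (B : KState Rule Event → Set Rule)
    (EC : Set Event) : ∀ (φ : SForm Rule) (k : ℕ) (s s' : KState Rule Event),
    KEquiv B EC k s s' → φ.UFree → φ.depth ≤ k →
    (SatS (Succ EC) B s φ ↔ SatS (Succ EC) B s' φ)
  | .atom r, k, s, s', h, _, _ => by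
    have := h [] (by intro E hE; simp at hE) (Nat.zero_le k)
    simp only [KState.append_nil] at this
    simp [SatS, this]
  | .conj φ ψ, k, s, s', h, hU, hd => by
    have h1 := kEquiv_sat_iff_aux B EC φ k s s' h hU.1
      (le_trans (le_max_left _ _) hd)
    have h2 := kEquiv_sat_iff_aux B EC ψ k s s' h hU.2
      (le_trans (le_max_right _ _) hd)
    simp [SatS, h1, h2]
  | .nnot φ, k, s, s', h, hU, hd => by
    have h1 := kEquiv_sat_iff_aux B EC φ k s s' h hU hd
    simp [SatS, h1]
  | .ex (.untl _ _), _, _, _, _, hU, _ => absurd hU (by simp [SForm.UFree, EForm.UFree])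
  | .all (.untl _ _), _, _, _, _, hU, _ => absurd hU (by simp [SForm.UFree, EForm.UFree])
  | .ex (.next ψ), k, s, s', h, hU, hd => by
    have hU' : ψ.UFree := hU
    have hd' : ψ.depth + 1 ≤ k := by
      simpa [SForm.depth, EForm.depth] using hd
    obtain ⟨k', rfl⟩ : ∃ k', k = k' + 1 := ⟨k - 1, by omega⟩
    have hdψ : ψ.depth ≤ k' := by omega
    rw [exNext_iff, exNext_iff]
    constructor
    · rintro ⟨t, hst, hsat⟩
      obtain ⟨t', hst', heq⟩ := succ_lift B EC h hst
      exact ⟨t', hst', (kEquiv_sat_iff_aux B EC ψ k' t t' heq hU' hdψ).mp hsat⟩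
    · rintro ⟨t', hst', hsat⟩
      have h' : KEquiv B EC (k' + 1) s' s := fun es a b => (h es a b).symm
      obtain ⟨t, hst, heq⟩ := succ_lift B EC h' hst'
      exact ⟨t, hst, (kEquiv_sat_iff_aux B EC ψ k' t' t heq hU' hdψ).mp hsat⟩
  | .all (.next ψ), k, s, s', h, hU, hd => by
    have hU' : ψ.UFree := hU
    have hd' : ψ.depth + 1 ≤ k := by
      simpa [SForm.depth, EForm.depth] using hd
    obtain ⟨k', rfl⟩ : ∃ k', k = k' + 1 := ⟨k - 1, by omega⟩
    have hdψ : ψ.depth ≤ k' := by omega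
    rw [allNext_iff, allNext_iff]
    constructor
    · intro hall t' hst'
      have h' : KEquiv B EC (k' + 1) s' s := fun es a b => (h es a b).symm
      obtain ⟨t, hst, heq⟩ := succ_lift B EC h' hst'
      exact (kEquiv_sat_iff_aux B EC ψ k' t t' (fun es a b => (heq es a b).symm) hU'
        hdψ).mp (hall t hst)
    · intro hall t hst
      obtain ⟨t', hst', heq⟩ := succ_lift B EC h hst
      exact (kEquiv_sat_iff_aux B EC ψ k' t' t (fun es a b => (heq es a b).symm) hU'
        hdψ).mp (hall t' hst')
  termination_by φ _ _ _ => sizeOf φ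
  decreasing_by all_goals (simp; try omega)

/-- k-equivalent knowledge states satisfy the same U-free EKBL state
    formulas whose nesting depth of evolution quantifiers is at most k. -/
theorem kEquiv_sat_iff {Rule Event : Type} (B : KState Rule Event → Set Rule)
    (EC : Set Event) (k : ℕ) (s s' : KState Rule Event) (h : KEquiv B EC k s s')
    (φ : SForm Rule) (hU : φ.UFree) (hd : φ.depth ≤ k) :
    SatS (Succ EC) B s φ ↔ SatS (Succ EC) B s' φ :=
  kEquiv_sat_iff_aux B EC φ k s s' h hU hd
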